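/- Let n ≥ 1 and let K ⊆ ℝ^{n+1} be a convex cone (containing 0) in Minkowski space E^{n+1}_1 such that every nonzero element of K is spacelike. Then either K is contained in a linear subspace of ℝ^{n+1} of dimension at most n, or K has nonempty interior in ℝ^{n+1} and the dual cone K* contains a pair of linearly independent null vectors u and u′ with u ∈ F and u′ ∈ P. -/

import Mathlib

open Set Pointwise

/-- The Minkowski bilinear form on `ℝ^(n+1)`:
`⟪x,y⟫ = x₁y₁ + ⋯ + xₙyₙ − x_{n+1}y_{n+1}`. -/
def mink {n : ℕ} (x y : EuclideanSpace ℝ (Fin (n + 1))) : ℝ :=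
  (∑ i : Fin n, x i.castSucc * y i.castSucc) - x (Fin.last n) * y (Fin.last n)

/-- The closed future cone in Minkowski space. -/
def futureCone (n : ℕ) : Set (EuclideanSpace ℝ (Fin (n + 1))) :=
  {v | mink v v ≤ 0 ∧ 0 ≤ v (Fin.last n)}

/-- The closed past cone in Minkowski space: `P = -F`. -/
def pastCone (n : ℕ) : Set (EuclideanSpace ℝ (Fin (n + 1))) :=
  -futureCone n

/-- The dual cone of a set with respect to the Minkowski form. -/
def minkDual {n : ℕ} (K : Set (EuclideanSpace ℝ (Fin (n + 1)))) :
    Set (EuclideanSpace ℝ (Fin (n + 1))) :=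
  {xs | ∀ x ∈ K, 0 ≤ mink xs x}

/-! Write vectors as `(a, t)` with `a ∈ ℝⁿ` and time coordinate `t`. If `K` spans, Hahn–Banach
separation of `K` from the open future cone gives a dual vector `(a, 1)` with `‖a‖ ≤ 1`, and the
same for `-K` gives a dual vector `(a', -1)` with `‖a'‖ ≤ 1`. Their sum `(a + a', 0)` is dual too,
and nonzero since the dual of a spanning cone contains no line. Sliding `a` and `a'` along
`a + a'` stays in the dual cone and reaches the unit sphere, i.e. the null cone; the two null
vectors are independent for the same reason that `a + a' ≠ 0`. -/

noncomputable section

open scoped RealInnerProductSpace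

lemma nonneg_of_forall_le_of_smul_mem {E : Type*} [AddCommGroup E] [Module ℝ E] {K : Set E}
    (hcone : ∀ c : ℝ, 0 ≤ c → ∀ x ∈ K, c • x ∈ K) (f : E →ₗ[ℝ] ℝ) {s : ℝ}
    (hs : ∀ x ∈ K, s ≤ f x) {x : E} (hx : x ∈ K) : 0 ≤ f x := by
  by_contra! hfx
  have h := hs _ (hcone ((s - 1) / f x) (div_nonneg_of_nonpos (by linarith [hs x hx]) hfx.le) x hx)
  rw [map_smul, smul_eq_mul, div_mul_cancel₀ _ hfx.ne] at h
  linarith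

lemma norm_le_one_of_forall_inner_lt_one {F : Type*} [NormedAddCommGroup F]
    [InnerProductSpace ℝ F] {a : F} (h : ∀ b : F, ‖b‖ < 1 → ⟪a, b⟫ < 1) : ‖a‖ ≤ 1 := by
  by_contra! ha
  have ha0 : ‖a‖ ≠ 0 := (one_pos.trans ha).ne'
  have h1 := h ((‖a‖ ^ 2)⁻¹ • a) (by
    rw [norm_smul, norm_inv, norm_pow, norm_norm, sq, mul_inv, inv_mul_cancel_right₀ ha0]
    exact inv_lt_one_of_one_lt₀ ha)
  rw [real_inner_smul_right, real_inner_self_eq_norm_sq, inv_mul_cancel₀ (pow_ne_zero 2 ha0)] at h1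
  exact h1.false

lemma exists_nonneg_norm_add_smul_eq_one {F : Type*} [NormedAddCommGroup F] [NormedSpace ℝ F]
    {a b : F} (ha : ‖a‖ ≤ 1) (hb : b ≠ 0) : ∃ r : ℝ, 0 ≤ r ∧ ‖a + r • b‖ = 1 := by
  have hb' : 0 < ‖b‖ := norm_pos_iff.mpr hb
  have hfar : 1 ≤ ‖a + (2 / ‖b‖) • b‖ := by
    have h := norm_sub_le (a + (2 / ‖b‖) • b) a
    rw [add_sub_cancel_left, norm_smul, Real.norm_of_nonneg (by positivity),
      div_mul_cancel₀ _ hb'.ne'] at h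
    linarith
  obtain ⟨r, hr, hr1⟩ := intermediate_value_Icc (by positivity : (0 : ℝ) ≤ 2 / ‖b‖)
    (by fun_prop : Continuous fun r : ℝ => ‖a + r • b‖).continuousOn ⟨by simpa using ha, hfar⟩
  exact ⟨r, hr.1, hr1⟩

lemma Convex.interior_nonempty_of_span_eq_top {V : Type*} [NormedAddCommGroup V]
    [NormedSpace ℝ V] [FiniteDimensional ℝ V] {K : Set V} (hconv : Convex ℝ K) (h0 : 0 ∈ K)
    (hspan : Submodule.span ℝ K = ⊤) : (interior K).Nonempty := by
  rw [hconv.interior_nonempty_iff_affineSpan_eq_top, ← AffineSubspace.coe_eq_univ_iff,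
    ← Set.insert_eq_self.mpr h0, affineSpan_insert_zero, hspan, Submodule.top_coe]

namespace Minkowski

variable {n : ℕ}

def space : EuclideanSpace ℝ (Fin (n + 1)) →L[ℝ] EuclideanSpace ℝ (Fin n) :=
  LinearMap.toContinuousLinearMap
    { toFun x := WithLp.toLp 2 fun i => x i.castSucc
      map_add' _ _ := by ext; simp
      map_smul' _ _ := by ext; simp }

def time : EuclideanSpace ℝ (Fin (n + 1)) →L[ℝ] ℝ := EuclideanSpace.proj (Fin.last n)

def mk (a : EuclideanSpace ℝ (Fin n)) (t : ℝ) : EuclideanSpace ℝ (Fin (n + 1)) :=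
  WithLp.toLp 2 (Fin.snoc (α := fun _ => ℝ) (fun i => a i) t)

@[simp] lemma space_apply (x : EuclideanSpace ℝ (Fin (n + 1))) (i : Fin n) :
    space x i = x i.castSucc := rfl

lemma time_apply (x : EuclideanSpace ℝ (Fin (n + 1))) : time x = x (Fin.last n) := rfl

@[simp] lemma space_mk (a : EuclideanSpace ℝ (Fin n)) (t : ℝ) : space (mk a t) = a := by
  ext i; simp [mk]

@[simp] lemma time_mk (a : EuclideanSpace ℝ (Fin n)) (t : ℝ) : time (mk a t) = t := by
  simp [mk, time_apply]

lemma ext {x y : EuclideanSpace ℝ (Fin (n + 1))} (hs : space x = space y)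
    (ht : time x = time y) : x = y := by
  ext i
  induction i using Fin.lastCases with
  | last => exact ht
  | cast i => exact congr($hs i)

lemma inner_eq_space_time (x y : EuclideanSpace ℝ (Fin (n + 1))) :
    ⟪x, y⟫ = ⟪space x, space y⟫ + time x * time y := by
  simp [PiLp.inner_apply, Fin.sum_univ_castSucc, time_apply, mul_comm]

lemma mink_eq_space_time (x y : EuclideanSpace ℝ (Fin (n + 1))) :
    mink x y = ⟪space x, space y⟫ - time x * time y := by
  simp [mink, PiLp.inner_apply, time_apply, mul_comm]

lemma mk_ne_zero (a : EuclideanSpace ℝ (Fin n)) {t : ℝ} (ht : t ≠ 0) : mk a t ≠ 0 :=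
  fun h => ht (by simpa using congr_arg time h)

lemma mink_mk_self (a : EuclideanSpace ℝ (Fin n)) (t : ℝ) :
    mink (mk a t) (mk a t) = ‖a‖ ^ 2 - t ^ 2 := by
  rw [mink_eq_space_time, space_mk, time_mk, real_inner_self_eq_norm_sq]
  ring

@[simp] lemma mk_add_mk (a b : EuclideanSpace ℝ (Fin n)) (s t : ℝ) :
    mk a s + mk b t = mk (a + b) (s + t) :=
  ext (by simp) (by simp)

@[simp] lemma smul_mk (c : ℝ) (a : EuclideanSpace ℝ (Fin n)) (t : ℝ) :
    c • mk a t = mk (c • a) (c * t) :=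
  ext (by simp) (by simp)

@[simp] lemma neg_mk (a : EuclideanSpace ℝ (Fin n)) (t : ℝ) : -mk a t = mk (-a) (-t) :=
  ext (by simp) (by simp)

lemma mink_add_left (u v x : EuclideanSpace ℝ (Fin (n + 1))) :
    mink (u + v) x = mink u x + mink v x := by
  simp only [mink_eq_space_time, map_add, inner_add_left]; ring

lemma mink_smul_left (c : ℝ) (u x : EuclideanSpace ℝ (Fin (n + 1))) :
    mink (c • u) x = c * mink u x := by
  simp only [mink_eq_space_time, map_smul, real_inner_smul_left, smul_eq_mul]; ring

lemma mink_neg_left (u x : EuclideanSpace ℝ (Fin (n + 1))) : mink (-u) x = -mink u x := by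
  simp only [mink_eq_space_time, map_neg, inner_neg_left]; ring

lemma mink_neg_right (u x : EuclideanSpace ℝ (Fin (n + 1))) : mink u (-x) = -mink u x := by
  simp only [mink_eq_space_time, map_neg, inner_neg_right]; ring

def minkₗ (u : EuclideanSpace ℝ (Fin (n + 1))) : EuclideanSpace ℝ (Fin (n + 1)) →ₗ[ℝ] ℝ where
  toFun := mink u
  map_add' x y := by simp only [mink_eq_space_time, map_add, inner_add_right]; ring
  map_smul' c x := by
    simp only [mink_eq_space_time, map_smul, real_inner_smul_right, smul_eq_mul, RingHom.id_apply]; ring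

@[simp] lemma minkₗ_apply (u x : EuclideanSpace ℝ (Fin (n + 1))) : minkₗ u x = mink u x := rfl

lemma exists_mink_eq (f : StrongDual ℝ (EuclideanSpace ℝ (Fin (n + 1)))) :
    ∃ u, ∀ x, f x = mink u x := by
  set w := (InnerProductSpace.toDual ℝ _).symm f
  refine ⟨mk (space w) (-time w), fun x => ?_⟩
  rw [← InnerProductSpace.toDual_symm_apply, inner_eq_space_time, mink_eq_space_time, space_mk, time_mk]
  ring

lemma eq_zero_of_forall_mink_eq_zero {u : EuclideanSpace ℝ (Fin (n + 1))}
    (h : ∀ x, mink u x = 0) : u = 0 := by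
  have hs := h (mk (space u) 0)
  have ht := h (mk 0 1)
  simp only [mink_eq_space_time, space_mk, time_mk, real_inner_self_eq_norm_sq, inner_zero_right] at hs ht
  exact ext (by simpa using hs) (by simpa using ht)

section Dual

variable {K : Set (EuclideanSpace ℝ (Fin (n + 1)))} {u v : EuclideanSpace ℝ (Fin (n + 1))}

lemma add_mem_minkDual (hu : u ∈ minkDual K) (hv : v ∈ minkDual K) : u + v ∈ minkDual K :=
  fun x hx => (mink_add_left u v x).symm ▸ add_nonneg (hu x hx) (hv x hx)

lemma smul_mem_minkDual {c : ℝ} (hc : 0 ≤ c) (hu : u ∈ minkDual K) : c • u ∈ minkDual K :=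
  fun x hx => (mink_smul_left c u x).symm ▸ mul_nonneg hc (hu x hx)

lemma neg_mem_minkDual_of_mem_minkDual_neg (hu : u ∈ minkDual (-K)) : -u ∈ minkDual K :=
  fun x hx => by
    rw [mink_neg_left, ← mink_neg_right]
    exact hu (-x) (neg_mem_neg.mpr hx)

lemma eq_zero_of_mem_minkDual_of_neg_mem (hspan : Submodule.span ℝ K = ⊤)
    (hu : u ∈ minkDual K) (hu' : -u ∈ minkDual K) : u = 0 := by
  have hK : Set.EqOn (minkₗ u) (0 : EuclideanSpace ℝ (Fin (n + 1)) →ₗ[ℝ] ℝ) K := fun x hx =>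
    le_antisymm (by simpa [mink_neg_left] using hu' x hx) (hu x hx)
  have hzero := LinearMap.ext_on hspan hK
  exact eq_zero_of_forall_mink_eq_zero fun x => by simpa using LinearMap.congr_fun hzero x

end Dual

def openFutureCone (n : ℕ) : Set (EuclideanSpace ℝ (Fin (n + 1))) :=
  {x | ‖space x‖ < time x}

lemma isOpen_openFutureCone : IsOpen (openFutureCone n) :=
  isOpen_lt (continuous_norm.comp space.continuous) time.continuous

lemma convex_openFutureCone : Convex ℝ (openFutureCone n) := by
  have hpre : openFutureCone n = (space.toLinearMap.prod time.toLinearMap) ⁻¹'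
      {p : EuclideanSpace ℝ (Fin n) × ℝ | p.1 ∈ univ ∧ ‖p.1‖ < p.2} := by
    ext x
    simp [openFutureCone]
  rw [hpre]
  exact (convexOn_norm convex_univ).convex_strict_epigraph.linear_preimage _

lemma mk_mem_openFutureCone {b : EuclideanSpace ℝ (Fin n)} (hb : ‖b‖ < 1) :
    mk b 1 ∈ openFutureCone n := by
  simpa [openFutureCone] using hb

lemma disjoint_openFutureCone {K : Set (EuclideanSpace ℝ (Fin (n + 1)))}
    (hK : ∀ x ∈ K, 0 ≤ mink x x) : Disjoint (openFutureCone n) K := by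
  refine Set.disjoint_left.mpr fun x hxU hxK => ?_
  have hx := hK x hxK
  rw [mink_eq_space_time, real_inner_self_eq_norm_sq] at hx
  have hxU' : ‖space x‖ < time x := hxU
  nlinarith [norm_nonneg (space x)]

lemma exists_mk_one_mem_minkDual {K : Set (EuclideanSpace ℝ (Fin (n + 1)))} (h0 : 0 ∈ K)
    (hconv : Convex ℝ K) (hcone : ∀ c : ℝ, 0 ≤ c → ∀ x ∈ K, c • x ∈ K)
    (hK : ∀ x ∈ K, 0 ≤ mink x x) : ∃ a, ‖a‖ ≤ 1 ∧ mk a 1 ∈ minkDual K := by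
  obtain ⟨f, s, hfU, hfK⟩ := geometric_hahn_banach_open convex_openFutureCone
    isOpen_openFutureCone hconv (disjoint_openFutureCone hK)
  obtain ⟨u, hu⟩ := exists_mink_eq f
  have hs : s ≤ 0 := by simpa using hfK 0 h0
  have hneg : ∀ y ∈ openFutureCone n, mink u y < 0 := fun y hy =>
    hu y ▸ (hfU y hy).trans_le hs
  have hdual : u ∈ minkDual K := fun x hx =>
    hu x ▸ nonneg_of_forall_le_of_smul_mem hcone f.toLinearMap hfK hx
  have ht : 0 < time u := by simpa [mink_eq_space_time] using hneg (mk 0 1) (by simp [openFutureCone])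
  have hmk : mk ((time u)⁻¹ • space u) 1 = (time u)⁻¹ • u := ext (by simp) (by simp [ht.ne'])
  refine ⟨(time u)⁻¹ • space u, norm_le_one_of_forall_inner_lt_one fun b hb => ?_,
    hmk ▸ smul_mem_minkDual (inv_nonneg.mpr ht.le) hdual⟩
  have h := hneg (mk b 1) (mk_mem_openFutureCone hb)
  rw [mink_eq_space_time, space_mk, time_mk, mul_one] at h
  rw [real_inner_smul_left, inv_mul_lt_iff₀ ht, mul_one]
  linarith

lemma exists_mk_neg_one_mem_minkDual {K : Set (EuclideanSpace ℝ (Fin (n + 1)))} (h0 : 0 ∈ K)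
    (hconv : Convex ℝ K) (hcone : ∀ c : ℝ, 0 ≤ c → ∀ x ∈ K, c • x ∈ K)
    (hK : ∀ x ∈ K, 0 ≤ mink x x) : ∃ a, ‖a‖ ≤ 1 ∧ mk a (-1) ∈ minkDual K := by
  obtain ⟨a, ha, hu⟩ := exists_mk_one_mem_minkDual (K := -K) (by simpa using h0) hconv.neg
    (fun c hc x hx => by simpa using hcone c hc (-x) hx)
    (fun x hx => by simpa [mink_neg_left, mink_neg_right] using hK (-x) hx)
  exact ⟨-a, by rwa [norm_neg], by simpa using neg_mem_minkDual_of_mem_minkDual_neg hu⟩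

lemma add_ne_zero_of_mk_mem_minkDual {K : Set (EuclideanSpace ℝ (Fin (n + 1)))}
    (hspan : Submodule.span ℝ K = ⊤) {a a' : EuclideanSpace ℝ (Fin n)}
    (hu : mk a 1 ∈ minkDual K) (hu' : mk a' (-1) ∈ minkDual K) : a + a' ≠ 0 := by
  intro h
  rw [eq_neg_of_add_eq_zero_right h, ← neg_mk] at hu'
  exact mk_ne_zero a one_ne_zero (eq_zero_of_mem_minkDual_of_neg_mem hspan hu hu')

lemma linearIndependent_of_mk_mem_minkDual {K : Set (EuclideanSpace ℝ (Fin (n + 1)))}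
    (hspan : Submodule.span ℝ K = ⊤) {a a' : EuclideanSpace ℝ (Fin n)}
    (hu : mk a 1 ∈ minkDual K) (hu' : mk a' (-1) ∈ minkDual K) :
    LinearIndependent ℝ ![mk a 1, mk a' (-1)] := by
  refine LinearIndependent.pair_iff.mpr fun s t hst => ?_
  have hts : t = s := by
    have h := congr_arg time hst
    simp only [smul_mk, mk_add_mk, time_mk, map_zero] at h
    linarith
  subst hts
  have hsum : t • (a + a') = 0 := by simpa [smul_add] using congr_arg space hst
  have ht := (smul_eq_zero.mp hsum).resolve_right (add_ne_zero_of_mk_mem_minkDual hspan hu hu')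
  exact ⟨ht, ht⟩

lemma exists_null_mk_mem_minkDual {K : Set (EuclideanSpace ℝ (Fin (n + 1)))} (h0 : 0 ∈ K)
    (hconv : Convex ℝ K) (hcone : ∀ c : ℝ, 0 ≤ c → ∀ x ∈ K, c • x ∈ K)
    (hK : ∀ x ∈ K, 0 ≤ mink x x) (hspan : Submodule.span ℝ K = ⊤) :
    ∃ a a' : EuclideanSpace ℝ (Fin n), ‖a‖ = 1 ∧ ‖a'‖ = 1 ∧
      mk a 1 ∈ minkDual K ∧ mk a' (-1) ∈ minkDual K := by
  obtain ⟨a, ha, hu⟩ := exists_mk_one_mem_minkDual h0 hconv hcone hK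
  obtain ⟨a', ha', hu'⟩ := exists_mk_neg_one_mem_minkDual h0 hconv hcone hK
  have hb : mk (a + a') 0 ∈ minkDual K := by simpa using add_mem_minkDual hu hu'
  have hb0 := add_ne_zero_of_mk_mem_minkDual hspan hu hu'
  obtain ⟨r, hr, hr1⟩ := exists_nonneg_norm_add_smul_eq_one ha hb0
  obtain ⟨r', hr', hr1'⟩ := exists_nonneg_norm_add_smul_eq_one ha' hb0
  exact ⟨_, _, hr1, hr1', by simpa using add_mem_minkDual hu (smul_mem_minkDual hr hb),
    by simpa using add_mem_minkDual hu' (smul_mem_minkDual hr' hb)⟩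

lemma mk_one_mem_futureCone {a : EuclideanSpace ℝ (Fin n)} (ha : ‖a‖ ≤ 1) :
    mk a 1 ∈ futureCone n := by
  refine ⟨?_, by simp [← time_apply]⟩
  rw [mink_mk_self]
  nlinarith [norm_nonneg a]

lemma mk_neg_one_mem_pastCone {a : EuclideanSpace ℝ (Fin n)} (ha : ‖a‖ ≤ 1) :
    mk a (-1) ∈ pastCone n := by
  simpa [pastCone] using mk_one_mem_futureCone (a := -a) (by rwa [norm_neg])

end Minkowski

open Minkowski in
theorem stmt_7 (n : ℕ)
    (K : Set (EuclideanSpace ℝ (Fin (n + 1))))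
    (h0 : (0 : EuclideanSpace ℝ (Fin (n + 1))) ∈ K)
    (hconv : Convex ℝ K)
    (hcone : ∀ c : ℝ, 0 ≤ c → ∀ x ∈ K, c • x ∈ K)
    (hspace : ∀ x ∈ K, x ≠ 0 → 0 < mink x x) :
    (∃ V : Submodule ℝ (EuclideanSpace ℝ (Fin (n + 1))),
        K ⊆ (V : Set (EuclideanSpace ℝ (Fin (n + 1)))) ∧ Module.finrank ℝ V ≤ n) ∨
    ((interior K).Nonempty ∧
      ∃ u u' : EuclideanSpace ℝ (Fin (n + 1)),
        LinearIndependent ℝ ![u, u'] ∧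
        u ≠ 0 ∧ mink u u = 0 ∧ u ∈ futureCone n ∧ u ∈ minkDual K ∧
        u' ≠ 0 ∧ mink u' u' = 0 ∧ u' ∈ pastCone n ∧ u' ∈ minkDual K) := by
  by_cases hspan : Submodule.span ℝ K = ⊤
  · have hK : ∀ x ∈ K, 0 ≤ mink x x := fun x hx => by
      rcases eq_or_ne x 0 with rfl | hx0
      · simp [mink]
      · exact (hspace x hx hx0).le
    obtain ⟨a, a', ha, ha', hu, hu'⟩ := exists_null_mk_mem_minkDual h0 hconv hcone hK hspan
    refine .inr ⟨hconv.interior_nonempty_of_span_eq_top h0 hspan, mk a 1, mk a' (-1),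
      linearIndependent_of_mk_mem_minkDual hspan hu hu', mk_ne_zero a one_ne_zero,
      by simp [mink_mk_self, ha], mk_one_mem_futureCone ha.le, hu,
      mk_ne_zero a' (neg_ne_zero.mpr one_ne_zero), by simp [mink_mk_self, ha'],
      mk_neg_one_mem_pastCone ha'.le, hu'⟩
  · refine .inl ⟨Submodule.span ℝ K, Submodule.subset_span, ?_⟩
    have h := Submodule.finrank_lt hspan
    rw [finrank_euclideanSpace, Fintype.card_fin] at h
    omega

end
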